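/- For 0 < ε < 1 one has artanh(1 - ε/2) ≥ artanh(1/2) = (1/2)ln 3; consequently, if U solves U' + U² + K = 0 with K ≤ -e^{-2μ}ε on [0, Λ̄] with Λ̄ ≥ (1/√ε)artanh(1 - ε/2), U(0) ≥ 0, and μ ≥ 0, then U(Λ̄) > e^{-μ}√ε · tanh((1/2)e^{-μ} ln 3). -/

import Mathlib

open Set

/-- The inverse hyperbolic tangent. -/
noncomputable def artanh (x : ℝ) : ℝ := (1 / 2) * Real.log ((1 + x) / (1 - x))

theorem artanh_eq_real_artanh {x : ℝ} (hx : x ∈ Icc (-1) 1) : artanh x = Real.artanh x :=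
  (Real.artanh_eq_half_log hx).symm

theorem artanh_one_half : artanh (1 / 2) = 1 / 2 * Real.log 3 := by
  norm_num [artanh]

theorem half_log_three_lt_artanh_one_sub_half {ε : ℝ} (hε0 : 0 < ε) (hε1 : ε < 1) :
    1 / 2 * Real.log 3 < artanh (1 - ε / 2) := by
  rw [← artanh_one_half, artanh_eq_real_artanh ⟨by norm_num, by norm_num⟩,
    artanh_eq_real_artanh ⟨by linarith, by linarith⟩]
  exact Real.artanh_lt_artanh (by norm_num) (by linarith) (by linarith)

theorem Real.hasDerivAt_tanh (x : ℝ) : HasDerivAt Real.tanh (1 - Real.tanh x ^ 2) x := by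
  have hcosh := (Real.cosh_pos x).ne'
  have h := (Real.hasDerivAt_sinh x).div (Real.hasDerivAt_cosh x) hcosh
  rw [show Real.sinh / Real.cosh = Real.tanh from
    funext fun y => (Real.tanh_eq_sinh_div_cosh y).symm] at h
  refine h.congr_deriv ?_
  rw [Real.tanh_eq_sinh_div_cosh]
  field_simp

theorem Real.tanh_strictMono : StrictMono Real.tanh := by
  intro x y hxy
  by_contra! hle
  have := Real.artanh_le_artanh (Real.neg_one_lt_tanh y) (Real.tanh_lt_one x) hle
  rw [Real.artanh_tanh, Real.artanh_tanh] at this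
  linarith

theorem Real.continuous_tanh : Continuous Real.tanh :=
  continuous_iff_continuousAt.mpr fun x => (Real.hasDerivAt_tanh x).continuousAt

theorem hasDerivAt_mul_tanh_mul (b x : ℝ) :
    HasDerivAt (fun t => b * Real.tanh (b * t)) (b ^ 2 - (b * Real.tanh (b * x)) ^ 2) x := by
  have h := ((Real.hasDerivAt_tanh (b * x)).comp x ((hasDerivAt_id x).const_mul b)).const_mul b
  refine h.congr_deriv ?_
  ring

section Riccati

variable {K U : ℝ → ℝ} {L : ℝ}

/-- `b tanh (b t)` solves `f' = b² - f²`, so it is a subsolution of the Riccati equation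
`U' = -U² - K` as long as `K < -b²`. -/
theorem mul_tanh_le_of_riccati_of_lt {b : ℝ}
    (hK : ∀ t ∈ Ico 0 L, K t < -b ^ 2)
    (hU : ∀ t ∈ Icc 0 L, HasDerivAt U (-U t ^ 2 - K t) t) (hU0 : 0 ≤ U 0) :
    ∀ t ∈ Icc 0 L, b * Real.tanh (b * t) ≤ U t := by
  refine image_le_of_deriv_right_lt_deriv_boundary'
    (fun x _ => (hasDerivAt_mul_tanh_mul b x).continuousAt.continuousWithinAt)
    (fun x _ => (hasDerivAt_mul_tanh_mul b x).hasDerivWithinAt)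
    (by simpa using hU0)
    (fun x hx => (hU x hx).continuousAt.continuousWithinAt)
    (fun x hx => (hU x (Ico_subset_Icc_self hx)).hasDerivWithinAt) ?_
  intro x hx hUx
  rw [hUx]
  linarith [hK x hx]

theorem mul_tanh_le_of_riccati {a : ℝ} (ha : 0 < a)
    (hK : ∀ t ∈ Ico 0 L, K t ≤ -a ^ 2)
    (hU : ∀ t ∈ Icc 0 L, HasDerivAt U (-U t ^ 2 - K t) t) (hU0 : 0 ≤ U 0) :
    ∀ t ∈ Icc 0 L, a * Real.tanh (a * t) ≤ U t := by
  intro t ht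
  -- The fencing theorem needs `K < -b²` strictly: compare with `b ∈ (0, a)` and let `b → a⁻`.
  have hcont : Continuous fun b => b * Real.tanh (b * t) :=
    continuous_id.mul (Real.continuous_tanh.comp (continuous_id.mul continuous_const))
  refine le_of_tendsto ((hcont.tendsto a).mono_left (nhdsWithin_le_nhds (s := Iio a))) ?_
  filter_upwards [Ioo_mem_nhdsLT ha] with b hb
  refine mul_tanh_le_of_riccati_of_lt (fun x hx => ?_) hU hU0 t ht
  nlinarith [hK x hx, hb.1, hb.2]

end Riccati

theorem stmt_9_general (ε μ Λb : ℝ) (hε0 : 0 < ε) (hε1 : ε < 1)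
    (hΛb : (1 / Real.sqrt ε) * artanh (1 - ε / 2) ≤ Λb)
    (K U : ℝ → ℝ)
    (hK : ∀ t ∈ Icc 0 Λb, K t ≤ -(Real.exp (-2 * μ) * ε))
    (hU : ∀ t ∈ Icc 0 Λb, HasDerivAt U (-(U t) ^ 2 - K t) t)
    (hU0 : 0 ≤ U 0) :
    artanh (1 / 2) = (1 / 2) * Real.log 3 ∧
    (1 / 2) * Real.log 3 ≤ artanh (1 - ε / 2) ∧
    Real.exp (-μ) * Real.sqrt ε *
      Real.tanh ((1 / 2) * Real.exp (-μ) * Real.log 3) < U Λb := by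
  have hartanh := half_log_three_lt_artanh_one_sub_half hε0 hε1
  refine ⟨artanh_one_half, hartanh.le, ?_⟩
  have hsqrt : 0 < Real.sqrt ε := Real.sqrt_pos.mpr hε0
  set a := Real.exp (-μ) * Real.sqrt ε
  have ha : 0 < a := by positivity
  have ha_sq : a ^ 2 = Real.exp (-2 * μ) * ε := by
    rw [mul_pow, Real.sq_sqrt hε0.le, ← Real.exp_nat_mul]
    ring_nf
  have hΛb0 : 0 ≤ Λb := by
    have := Real.log_pos (by norm_num : (1 : ℝ) < 3)
    exact le_trans (mul_nonneg (by positivity) (by linarith)) hΛb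
  have hcomparison := mul_tanh_le_of_riccati ha
    (fun t ht => ha_sq ▸ hK t (Ico_subset_Icc_self ht)) hU hU0 Λb ⟨hΛb0, le_rfl⟩
  have harg : 1 / 2 * Real.exp (-μ) * Real.log 3 < a * Λb :=
    calc 1 / 2 * Real.exp (-μ) * Real.log 3
        < Real.exp (-μ) * artanh (1 - ε / 2) := by nlinarith [Real.exp_pos (-μ)]
      _ = a * ((1 / Real.sqrt ε) * artanh (1 - ε / 2)) := by simp only [a]; field_simp
      _ ≤ a * Λb := by gcongr
  exact (mul_lt_mul_of_pos_left (Real.tanh_strictMono harg) ha).trans_le hcomparison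

/-- For `0 < ε < 1`, `artanh(1-ε/2) ≥ artanh(1/2) = (1/2) ln 3`; consequently if
`U` solves `U' + U² + K = 0` with `K ≤ -e^{-2μ} ε` on `[0,Λ̄]`,
`Λ̄ ≥ (1/√ε) artanh(1-ε/2)`, `U 0 ≥ 0` and `μ ≥ 0`, then
`U Λ̄ > e^{-μ} √ε tanh((1/2) e^{-μ} ln 3)`. -/
theorem stmt_9 (ε μ Λb : ℝ) (hε0 : 0 < ε) (hε1 : ε < 1) (hμ : 0 ≤ μ)
    (hΛb : (1 / Real.sqrt ε) * artanh (1 - ε / 2) ≤ Λb)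
    (K U : ℝ → ℝ)
    (hKcont : ContinuousOn K (Icc 0 Λb))
    (hK : ∀ t ∈ Icc 0 Λb, K t ≤ -(Real.exp (-2 * μ) * ε))
    (hU : ∀ t ∈ Icc 0 Λb, HasDerivAt U (-(U t) ^ 2 - K t) t)
    (hU0 : 0 ≤ U 0) :
    artanh (1 / 2) = (1 / 2) * Real.log 3 ∧
    (1 / 2) * Real.log 3 ≤ artanh (1 - ε / 2) ∧
    Real.exp (-μ) * Real.sqrt ε *
      Real.tanh ((1 / 2) * Real.exp (-μ) * Real.log 3) < U Λb :=
  stmt_9_general ε μ Λb hε0 hε1 hΛb K U hK hU hU0
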